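/- arXiv:2403.04892 — 2 statements merged into one kernel-verified Lean document; each statement's English description precedes it below -/
import Mathlib

section
/- Let A be an n×n positive definite Hermitian matrix with spectrum contained in [m, M] where 0 < m < M, and let V be an n×k matrix with V*V = I_k. Then V* A² V ≤ K(m, M, 2) · (V* A V)², where K(m, M, 2) = (M+m)²/(4Mm). -/
open Matrix ComplexOrder

/-!
Since the eigenvalues of `A` lie in `[m, M]`, the matrix `(M - A)(A - m) = (M + m)A - Mm - A²` is
positive semidefinite. Compressing by the isometry `V` keeps it so, which gives
`V*A²V ≤ (M + m)B - Mm` for `B = V*AV`. The Kantorovich constant is exactly the one for which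
`K B² - ((M + m)B - Mm) = (4Mm)⁻¹ ((M + m)B - 2Mm)²` is a square, hence positive semidefinite.
-/

namespace Matrix

variable {n k 𝕜 : Type*} [Fintype n] [DecidableEq n] [RCLike 𝕜]

open scoped MatrixOrder in
theorem IsHermitian.posSemidef_smul_sub_smul_one_sub_sq {A : Matrix n n 𝕜}
    (hA : A.IsHermitian) {m M : ℝ} (h : ∀ i, hA.eigenvalues i ∈ Set.Icc m M) :
    ((M + m) • A - (M * m) • 1 - A ^ 2).PosSemidef := by
  have hcfc : cfc (fun x : ℝ => (M + m) * x - M * m - x ^ 2) A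
      = (M + m) • A - (M * m) • 1 - A ^ 2 := by
    rw [cfc_sub .., cfc_sub .., cfc_const_mul_id .., cfc_const .., cfc_pow_id ..,
      Algebra.algebraMap_eq_smul_one]
  rw [← hcfc, ← nonneg_iff_posSemidef]
  refine cfc_nonneg fun x hx => ?_
  obtain ⟨i, rfl⟩ := hA.spectrum_real_eq_range_eigenvalues ▸ hx
  nlinarith [(h i).1, (h i).2]

theorem IsHermitian.posSemidef_sq {B : Matrix n n 𝕜} (hB : B.IsHermitian) :
    (B ^ 2).PosSemidef := by
  simpa [sq, hB.eq] using posSemidef_conjTranspose_mul_self B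

theorem IsHermitian.posSemidef_smul_sq_sub {B : Matrix n n 𝕜} (hB : B.IsHermitian)
    {m M : ℝ} (hm : 0 < m) (hM : 0 < M) :
    (((M + m) ^ 2 / (4 * M * m)) • B ^ 2 - ((M + m) • B - (M * m) • 1)).PosSemidef := by
  have hsq : ((M + m) • B - (2 * M * m) • 1 : Matrix n n 𝕜).IsHermitian :=
    (hB.smul (.all _)).sub (isHermitian_one.smul (.all _))
  have key : ((M + m) ^ 2 / (4 * M * m)) • B ^ 2 - ((M + m) • B - (M * m) • 1)
      = (4 * M * m)⁻¹ • ((M + m) • B - (2 * M * m) • 1) ^ 2 := by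
    simp only [sq, sub_mul, mul_sub, mul_one, one_mul, smul_mul_assoc, mul_smul_comm]
    match_scalars <;> field_simp <;> ring
  rw [key]
  exact hsq.posSemidef_sq.smul (by positivity)

theorem conjTranspose_mul_mul_of_conjTranspose_mul_self_eq_one [DecidableEq k] {A : Matrix n n 𝕜}
    {V : Matrix n k 𝕜} (hV : Vᴴ * V = 1) (a b : ℝ) :
    Vᴴ * (a • A - b • 1 - A ^ 2) * V = a • (Vᴴ * A * V) - b • 1 - Vᴴ * A ^ 2 * V := by
  rw [Matrix.mul_sub, Matrix.mul_sub, Matrix.sub_mul, Matrix.sub_mul, Matrix.mul_smul,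
    Matrix.mul_smul, Matrix.smul_mul, Matrix.smul_mul, Matrix.mul_one, hV, Matrix.mul_assoc]

end Matrix

theorem stmt_2 {n k : ℕ} {A : Matrix (Fin n) (Fin n) ℂ} (hA : A.PosDef)
    (m M : ℝ) (hm : 0 < m) (hmM : m < M)
    (hspec : ∀ i, hA.1.eigenvalues i ∈ Set.Icc m M)
    (V : Matrix (Fin n) (Fin k) ℂ) (hV : Vᴴ * V = 1) :
    (((M + m) ^ 2 / (4 * M * m) : ℝ) • (Vᴴ * A * V) ^ 2 - Vᴴ * A ^ 2 * V).PosSemidef := by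
  have hcompressed :=
    (hA.1.posSemidef_smul_sub_smul_one_sub_sq hspec).conjTranspose_mul_mul_same V
  rw [conjTranspose_mul_mul_of_conjTranspose_mul_self_eq_one hV] at hcompressed
  have hsquare :=
    (isHermitian_conjTranspose_mul_mul V hA.1).posSemidef_smul_sq_sub hm (hm.trans hmM)
  simpa only [sub_add_sub_cancel] using hsquare.add hcompressed
end

section
/- Let A be an n×n positive definite Hermitian matrix and let p_L, p_U be real polynomials with 0 ≤ p_L(x) ≤ f(x) ≤ p_U(x) for all x in the spectrum of A, where f : ℝ → ℝ. Assume p_L(A) is positive definite with spectrum in [m_L, M_L] (0 < m_L < M_L) and p_U(A) has spectrum in [m_U, M_U] (0 < m_U < M_U). Then for any integer r ≥ 2: K(m_L, M_L, r)^{-1} · p_L(A)^r ≤ f(A)^r ≤ K(m_U, M_U, r) · p_U(A)^r, where K is the Kantorovich function. -/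
open Matrix ComplexOrder Real

/-- The Kantorovich function `K(m, M, r)`. -/
noncomputable def kantorovich (m M r : ℝ) : ℝ :=
  (m * M ^ r - M * m ^ r) / ((r - 1) * (M - m)) *
    ((r - 1) * (M ^ r - m ^ r) / (r * (m * M ^ r - M * m ^ r))) ^ r

/-!
All the matrices involved are functions of the one Hermitian matrix `A`, so both Loewner
inequalities reduce, eigenvalue by eigenvalue, to the scalar chain
`K⁻¹ p_L(λ)^r ≤ p_L(λ)^r ≤ f(λ)^r ≤ p_U(λ)^r ≤ K p_U(λ)^r`, and it remains to see `K(m, M, r) ≥ 1`.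
For this, `K = L(μ) / μ^r`, where `L` is the secant of `x ↦ x^r` over `[m, M]` and `μ ∈ [m, M]`
is the point maximizing `L(x) / x^r`; convexity of `x ↦ x^r` gives `μ^r ≤ L(μ)`.
-/

open scoped MatrixOrder

lemma pow_sub_pow_bounds {m M : ℝ} (hm : 0 ≤ m) (hmM : m ≤ M) (r : ℕ) :
    r * m ^ (r - 1) * (M - m) ≤ M ^ r - m ^ r ∧ M ^ r - m ^ r ≤ r * M ^ (r - 1) * (M - m) := by
  have hterm : ∀ i ∈ Finset.range r,
      m ^ (r - 1) ≤ M ^ i * m ^ (r - 1 - i) ∧ M ^ i * m ^ (r - 1 - i) ≤ M ^ (r - 1) := by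
    intro i hi
    have hi : i ≤ r - 1 := by rw [Finset.mem_range] at hi; omega
    rw [← pow_mul_pow_sub m hi, ← pow_mul_pow_sub M hi]
    exact ⟨by gcongr, by gcongr; exact pow_nonneg (hm.trans hmM) _⟩
  have hlow := Finset.card_nsmul_le_sum _ _ _ fun i hi => (hterm i hi).1
  have hupp := Finset.sum_le_card_nsmul _ _ _ fun i hi => (hterm i hi).2
  rw [Finset.card_range, nsmul_eq_mul] at hlow hupp
  rw [← geom_sum₂_mul M m r]
  have hMm : 0 ≤ M - m := sub_nonneg.2 hmM
  exact ⟨by gcongr, by gcongr⟩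

lemma pow_le_secant {m M x : ℝ} (hm : 0 ≤ m) (hmx : m ≤ x) (hxM : x ≤ M) (hmM : m < M)
    (r : ℕ) : x ^ r ≤ ((M - x) * m ^ r + (x - m) * M ^ r) / (M - m) := by
  have hMm : 0 < M - m := sub_pos.2 hmM
  have hconv := (convexOn_pow r).2 (Set.mem_Ici.2 hm) (Set.mem_Ici.2 (hm.trans hmM.le))
    (div_nonneg (sub_nonneg.2 hxM) hMm.le) (div_nonneg (sub_nonneg.2 hmx) hMm.le)
    (by field_simp; ring)
  have hx : (M - x) / (M - m) * m + (x - m) / (M - m) * M = x := by field_simp; ring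
  simp only [smul_eq_mul, hx] at hconv
  rwa [add_div, mul_div_right_comm, mul_div_right_comm (x - m)]

noncomputable def kantorovichPoint (m M : ℝ) (r : ℕ) : ℝ :=
  r * (m * M ^ r - M * m ^ r) / ((r - 1) * (M ^ r - m ^ r))

section Kantorovich

variable {m M : ℝ} {r : ℕ}

lemma kantorovich_eq :
    kantorovich m M r =
      (m * M ^ r - M * m ^ r) / ((r - 1) * (M - m)) / kantorovichPoint m M r ^ r := by
  rw [kantorovich, kantorovichPoint, div_eq_mul_inv _ (_ ^ r), ← inv_pow, inv_div]
  simp only [Real.rpow_natCast]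

lemma kantorovichPoint_mem_Icc (hm : 0 < m) (hmM : m < M) (hr : 2 ≤ r) :
    kantorovichPoint m M r ∈ Set.Icc m M := by
  have hM : 0 < M := hm.trans hmM
  have hr1 : (1 : ℝ) < r := by exact_mod_cast hr
  have hd : 0 < M ^ r - m ^ r := sub_pos.2 (pow_lt_pow_left₀ hmM hm.le (by omega))
  have hden : 0 < ((r : ℝ) - 1) * (M ^ r - m ^ r) := mul_pos (by linarith) hd
  obtain ⟨hlow, hupp⟩ := pow_sub_pow_bounds hm.le hmM.le r
  have eM : M ^ r = M * M ^ (r - 1) := by rw [← pow_succ', Nat.sub_add_cancel (by omega)]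
  have em : m ^ r = m * m ^ (r - 1) := by rw [← pow_succ', Nat.sub_add_cancel (by omega)]
  rw [kantorovichPoint, Set.mem_Icc, le_div_iff₀ hden, div_le_iff₀ hden]
  rw [eM, em] at hlow hupp ⊢
  constructor
  · nlinarith [mul_le_mul_of_nonneg_left hlow hm.le]
  · nlinarith [mul_le_mul_of_nonneg_left hupp hM.le]

lemma one_le_kantorovich (hm : 0 < m) (hmM : m < M) (hr : 2 ≤ r) :
    1 ≤ kantorovich m M r := by
  obtain ⟨hmμ, hμM⟩ := kantorovichPoint_mem_Icc hm hmM hr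
  have hμ : 0 < kantorovichPoint m M r := hm.trans_le hmμ
  have hr1 : (r : ℝ) - 1 ≠ 0 := by
    rw [sub_ne_zero]; exact_mod_cast (by omega : r ≠ 1)
  have hd : M ^ r - m ^ r ≠ 0 := (sub_pos.2 (pow_lt_pow_left₀ hmM hm.le (by omega))).ne'
  have hMm : M - m ≠ 0 := (sub_pos.2 hmM).ne'
  have hsecant : ((M - kantorovichPoint m M r) * m ^ r + (kantorovichPoint m M r - m) * M ^ r)
      / (M - m) = (m * M ^ r - M * m ^ r) / ((r - 1) * (M - m)) := by
    rw [kantorovichPoint]; field_simp; ring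
  rw [kantorovich_eq, le_div_iff₀ (pow_pos hμ r), one_mul, ← hsecant]
  exact pow_le_secant hm.le hmμ hμM hmM r

end Kantorovich

namespace Matrix.IsHermitian

variable {n 𝕜 : Type*} [Fintype n] [DecidableEq n] [RCLike 𝕜] {A : Matrix n n 𝕜}

lemma cfc_pow (hA : A.IsHermitian) (g : ℝ → ℝ) (r : ℕ) :
    hA.cfc (fun x => g x ^ r) = hA.cfc g ^ r := by
  rw [← cfc_eq, ← cfc_eq, _root_.cfc_pow _ _ _ (A.finite_real_spectrum.continuousOn _)
    hA.isSelfAdjoint]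

lemma cfc_const_mul (hA : A.IsHermitian) (c : ℝ) (g : ℝ → ℝ) :
    hA.cfc (fun x => c * g x) = c • hA.cfc g := by
  rw [← cfc_eq, ← cfc_eq, _root_.cfc_const_mul _ _ _ (A.finite_real_spectrum.continuousOn _)]

lemma cfc_mono (hA : A.IsHermitian) {g h : ℝ → ℝ}
    (hgh : ∀ i, g (hA.eigenvalues i) ≤ h (hA.eigenvalues i)) : hA.cfc g ≤ hA.cfc h := by
  rw [← cfc_eq, ← cfc_eq]
  refine _root_.cfc_mono (fun x hx => ?_) (A.finite_real_spectrum.continuousOn _)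
    (A.finite_real_spectrum.continuousOn _)
  obtain ⟨i, rfl⟩ := hA.spectrum_real_eq_range_eigenvalues ▸ hx
  exact hgh i

end Matrix.IsHermitian

theorem stmt_17_general {n : ℕ} {A : Matrix (Fin n) (Fin n) ℂ} (hA : A.PosDef)
    (f : ℝ → ℝ) (pL pU : Polynomial ℝ)
    (hbounds : ∀ i, 0 ≤ pL.eval (hA.1.eigenvalues i) ∧
      pL.eval (hA.1.eigenvalues i) ≤ f (hA.1.eigenvalues i) ∧
      f (hA.1.eigenvalues i) ≤ pU.eval (hA.1.eigenvalues i))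
    (mL ML mU MU : ℝ) (hmL : 0 < mL) (hLo : mL < ML) (hmU : 0 < mU) (hUo : mU < MU)
    (r : ℕ) (hr : 2 ≤ r) :
    ((hA.1.cfc f) ^ r - (kantorovich mL ML (r : ℝ))⁻¹ •
        (hA.1.cfc (fun x => pL.eval x)) ^ r).PosSemidef ∧
      (kantorovich mU MU (r : ℝ) • (hA.1.cfc (fun x => pU.eval x)) ^ r -
        (hA.1.cfc f) ^ r).PosSemidef := by
  have hKL := one_le_kantorovich hmL hLo hr
  have hKU := one_le_kantorovich hmU hUo hr
  refine ⟨Matrix.le_iff.mp ?_, Matrix.le_iff.mp ?_⟩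
  all_goals
    rw [← hA.1.cfc_pow, ← hA.1.cfc_pow, ← hA.1.cfc_const_mul]
    refine hA.1.cfc_mono fun i => ?_
    obtain ⟨hL0, hLf, hfU⟩ := hbounds i
  · calc (kantorovich mL ML r)⁻¹ * pL.eval (hA.1.eigenvalues i) ^ r
        ≤ pL.eval (hA.1.eigenvalues i) ^ r :=
          mul_le_of_le_one_left (pow_nonneg hL0 r) (inv_le_one_of_one_le₀ hKL)
      _ ≤ f (hA.1.eigenvalues i) ^ r := pow_le_pow_left₀ hL0 hLf r
  · calc f (hA.1.eigenvalues i) ^ r ≤ pU.eval (hA.1.eigenvalues i) ^ r :=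
          pow_le_pow_left₀ (hL0.trans hLf) hfU r
      _ ≤ kantorovich mU MU r * pU.eval (hA.1.eigenvalues i) ^ r :=
          le_mul_of_one_le_left (pow_nonneg (hL0.trans (hLf.trans hfU)) r) hKU

theorem stmt_17 {n : ℕ} {A : Matrix (Fin n) (Fin n) ℂ} (hA : A.PosDef)
    (f : ℝ → ℝ) (pL pU : Polynomial ℝ)
    (hbounds : ∀ i, 0 ≤ pL.eval (hA.1.eigenvalues i) ∧
      pL.eval (hA.1.eigenvalues i) ≤ f (hA.1.eigenvalues i) ∧
      f (hA.1.eigenvalues i) ≤ pU.eval (hA.1.eigenvalues i))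
    (mL ML mU MU : ℝ) (hmL : 0 < mL) (hLo : mL < ML) (hmU : 0 < mU) (hUo : mU < MU)
    (hLpos : (hA.1.cfc (fun x => pL.eval x)).PosDef)
    (hLherm : (hA.1.cfc (fun x => pL.eval x)).IsHermitian)
    (hUherm : (hA.1.cfc (fun x => pU.eval x)).IsHermitian)
    (hLspec : ∀ i, hLherm.eigenvalues i ∈ Set.Icc mL ML)
    (hUspec : ∀ i, hUherm.eigenvalues i ∈ Set.Icc mU MU)
    (r : ℕ) (hr : 2 ≤ r) :
    ((hA.1.cfc f) ^ r - (kantorovich mL ML (r : ℝ))⁻¹ •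
        (hA.1.cfc (fun x => pL.eval x)) ^ r).PosSemidef ∧
      (kantorovich mU MU (r : ℝ) • (hA.1.cfc (fun x => pU.eval x)) ^ r -
        (hA.1.cfc f) ^ r).PosSemidef :=
  stmt_17_general hA f pL pU hbounds mL ML mU MU hmL hLo hmU hUo r hr
end
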